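/- Let k₁, k₂ be natural numbers with 1 ≤ k₁, 1 < k₂, and k₁ + k₂ ≤ dim E. Then for lines L₁, L₂ (one-dimensional subspaces of E) the following are equivalent: (i) L₁ ⊥ L₂; (ii) there exist subspaces X₁, X₂ of E with dim X₁ = k₁, dim X₂ = k₂, X₁ ⊥x X₂, L₁ ⊆ X₁, and L₂ ⊆ X₂. -/

import Mathlib

/-!
Only (i) ⇒ (ii) needs an argument. Pick `p₁ ∈ L₁`, `p₂ ∈ L₂` and split `p₂ - p₁ = a + w` with
`a` in the direction `d₁` of `L₁` and `w ⊥ d₁`. Then `d₁` is orthogonal to `d₂ + ℝ w`, which has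
dimension at most `2 ≤ k₂`. Two orthogonal subspaces of dimensions at most `k₁`, `k₂` with
`k₁ + k₂ ≤ dim E` extend to orthogonal subspaces `D₁`, `D₂` of dimensions exactly `k₁`, `k₂`
(enlarge the second inside the orthogonal complement of the first, then the first inside the
orthogonal complement of the enlarged second). The affine subspaces through `p₁ + a` with
directions `D₁`, `D₂` contain `L₁` and `L₂`.
-/

/-- `Perp X Y`: every vector in the direction of `X` is orthogonal to every
vector in the direction of `Y`. -/
def Perp {E : Type*} [NormedAddCommGroup E] [InnerProductSpace ℝ E]
    (X Y : AffineSubspace ℝ E) : Prop :=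
  ∀ u ∈ X.direction, ∀ v ∈ Y.direction, (inner ℝ u v : ℝ) = 0

/-- `PerpX X Y`: `X ⊥ Y` and `X ∩ Y ≠ ∅`. -/
def PerpX {E : Type*} [NormedAddCommGroup E] [InnerProductSpace ℝ E]
    (X Y : AffineSubspace ℝ E) : Prop :=
  Perp X Y ∧ ((X : Set E) ∩ (Y : Set E)).Nonempty

/-- `PerpGo X₁ X₂`: the relation `⊥g∘`. -/
def PerpGo {E : Type*} [NormedAddCommGroup E] [InnerProductSpace ℝ E]
    (X₁ X₂ : AffineSubspace ℝ E) : Prop :=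
  ∃ q : E, q ∈ X₁ ⊓ X₂ ∧ ∃ Z₁ Z₂ : AffineSubspace ℝ E,
    q ∈ Z₁ ∧ q ∈ Z₂ ∧ PerpX Z₁ (X₁ ⊓ X₂) ∧ PerpX Z₂ (X₁ ⊓ X₂) ∧ PerpX Z₁ Z₂ ∧
    (X₁ ⊓ X₂) ⊔ Z₁ = X₁ ∧ (X₁ ⊓ X₂) ⊔ Z₂ = X₂

/-- `PerpG X₁ X₂`: the relation `⊥g`. -/
def PerpG {E : Type*} [NormedAddCommGroup E] [InnerProductSpace ℝ E]
    (X₁ X₂ : AffineSubspace ℝ E) : Prop :=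
  PerpGo X₁ X₂ ∧ X₁ ⊓ X₂ ≠ X₁ ∧ X₁ ⊓ X₂ ≠ X₂

/-- Dimension of an affine subspace: the dimension of its direction. -/
noncomputable def adim {E : Type*} [NormedAddCommGroup E] [InnerProductSpace ℝ E]
    (X : AffineSubspace ℝ E) : ℕ :=
  Module.finrank ℝ X.direction

variable {E : Type*} [NormedAddCommGroup E] [InnerProductSpace ℝ E] [FiniteDimensional ℝ E]

open Module Submodule

theorem Submodule.exists_finrank_eq_of_le {K V : Type*} [DivisionRing K] [AddCommGroup V]
    [Module K V] [FiniteDimensional K V] {p t : Submodule K V} (hpt : p ≤ t) {k : ℕ}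
    (hp : finrank K p ≤ k) (ht : k ≤ finrank K t) :
    ∃ q : Submodule K V, p ≤ q ∧ q ≤ t ∧ finrank K q = k := by
  induction k, hp using Nat.le_induction with
  | base => exact ⟨p, le_rfl, hpt, rfl⟩
  | succ k _ ih =>
    obtain ⟨q, hpq, hqt, hq⟩ := ih (Nat.le_of_succ_le ht)
    obtain ⟨x, hxt, hxq⟩ := SetLike.exists_of_lt <|
      lt_of_le_of_ne hqt fun h => by rw [h] at hq; omega
    exact ⟨q ⊔ K ∙ x, hpq.trans le_sup_left,
      sup_le hqt ((span_singleton_le_iff_mem x t).2 hxt),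
      by rw [finrank_sup_span_singleton hxq, hq]⟩

theorem Submodule.finrank_sup_span_singleton_le {K V : Type*} [DivisionRing K] [AddCommGroup V]
    [Module K V] [FiniteDimensional K V] (p : Submodule K V) (v : V) :
    finrank K ↥(p ⊔ K ∙ v) ≤ finrank K p + 1 := by
  by_cases hv : v ∈ p
  · rw [sup_eq_left.2 ((span_singleton_le_iff_mem v p).2 hv)]
    exact Nat.le_succ _
  · rw [finrank_sup_span_singleton hv]

theorem Submodule.IsOrtho.exists_le_le_finrank_eq {𝕜 V : Type*} [RCLike 𝕜]
    [NormedAddCommGroup V] [InnerProductSpace 𝕜 V] [FiniteDimensional 𝕜 V]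
    {U W : Submodule 𝕜 V} (h : U ⟂ W) {m n : ℕ} (hU : finrank 𝕜 U ≤ m)
    (hW : finrank 𝕜 W ≤ n) (hmn : m + n ≤ finrank 𝕜 V) :
    ∃ U' W' : Submodule 𝕜 V,
      U ≤ U' ∧ W ≤ W' ∧ U' ⟂ W' ∧ finrank 𝕜 U' = m ∧ finrank 𝕜 W' = n := by
  obtain ⟨W', hWW', hW'U, hW'⟩ := exists_finrank_eq_of_le h.ge hW
    (by have := U.finrank_add_finrank_orthogonal; omega)
  obtain ⟨U', hUU', hU'W', hU'⟩ := exists_finrank_eq_of_le (IsOrtho.symm hW'U).le hU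
    (by have := W'.finrank_add_finrank_orthogonal; omega)
  exact ⟨U', W', hUU', hWW', hU'W', hU', hW'⟩

theorem AffineSubspace.le_mk'_of_mem {k V P : Type*} [Ring k] [AddCommGroup V] [Module k V]
    [AddTorsor V P] {s : AffineSubspace k P} {p q : P} {D : Submodule k V} (hp : p ∈ s)
    (hpq : p ∈ mk' q D) (hs : s.direction ≤ D) : s ≤ mk' q D :=
  calc s = mk' p s.direction := (mk'_eq hp).symm
    _ ≤ mk' p D := (mk'_le_mk'_iff p).2 hs
    _ = mk' q D := by rw [← mk'_eq hpq, direction_mk']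

section Perp

variable {V : Type*} [NormedAddCommGroup V] [InnerProductSpace ℝ V]

theorem perp_iff_isOrtho {X Y : AffineSubspace ℝ V} : Perp X Y ↔ X.direction ⟂ Y.direction :=
  isOrtho_iff_inner_eq.symm

theorem Perp.mono {X Y X' Y' : AffineSubspace ℝ V} (h : Perp X Y) (hX : X' ≤ X) (hY : Y' ≤ Y) :
    Perp X' Y' :=
  perp_iff_isOrtho.2 <| (perp_iff_isOrtho.1 h).mono (AffineSubspace.direction_le hX)
    (AffineSubspace.direction_le hY)

theorem exists_perpX_of_vsub_mem_sup {L₁ L₂ : AffineSubspace ℝ V} {p₁ p₂ : V} (hp₁ : p₁ ∈ L₁)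
    (hp₂ : p₂ ∈ L₂) {D₁ D₂ : Submodule ℝ V} (hD : D₁ ⟂ D₂) (h₁ : L₁.direction ≤ D₁)
    (h₂ : L₂.direction ≤ D₂) (hp : p₂ -ᵥ p₁ ∈ D₁ ⊔ D₂) :
    ∃ X₁ X₂ : AffineSubspace ℝ V, X₁.direction = D₁ ∧ X₂.direction = D₂ ∧ PerpX X₁ X₂ ∧
      L₁ ≤ X₁ ∧ L₂ ≤ X₂ := by
  obtain ⟨a, ha, b, hb, hab⟩ := mem_sup.1 hp
  set q := a +ᵥ p₁
  open AffineSubspace in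
  refine ⟨mk' q D₁, mk' q D₂, direction_mk' q D₁, direction_mk' q D₂,
    ⟨perp_iff_isOrtho.2 (by simpa only [direction_mk'] using hD),
      q, self_mem_mk' q D₁, self_mem_mk' q D₂⟩, le_mk'_of_mem hp₁ ?_ h₁, le_mk'_of_mem hp₂ ?_ h₂⟩
  · rw [AffineSubspace.mem_mk', vsub_vadd_eq_vsub_sub, vsub_self, zero_sub]
    exact D₁.neg_mem ha
  · rwa [AffineSubspace.mem_mk', vsub_vadd_eq_vsub_sub, ← hab, add_sub_cancel_left]

end Perp

theorem stmt6 (k₁ k₂ : ℕ) (hk₁ : 1 ≤ k₁) (hk₂ : 1 < k₂)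
    (hdim : k₁ + k₂ ≤ Module.finrank ℝ E)
    (L₁ L₂ : AffineSubspace ℝ E)
    (hL₁ : (L₁ : Set E).Nonempty) (hL₂ : (L₂ : Set E).Nonempty)
    (hL₁d : adim L₁ = 1) (hL₂d : adim L₂ = 1) :
    Perp L₁ L₂ ↔
      ∃ X₁ X₂ : AffineSubspace ℝ E, (X₁ : Set E).Nonempty ∧ (X₂ : Set E).Nonempty ∧
        adim X₁ = k₁ ∧ adim X₂ = k₂ ∧ PerpX X₁ X₂ ∧ L₁ ≤ X₁ ∧ L₂ ≤ X₂ := by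
  refine ⟨fun h => ?_, fun ⟨X₁, X₂, _, _, _, _, hX, h₁, h₂⟩ => hX.1.mono h₁ h₂⟩
  obtain ⟨p₁, hp₁⟩ := hL₁
  obtain ⟨p₂, hp₂⟩ := hL₂
  obtain ⟨a, ha, w, hw, hv⟩ := L₁.direction.exists_add_mem_mem_orthogonal (p₂ -ᵥ p₁)
  have hB : L₁.direction ⟂ L₂.direction ⊔ ℝ ∙ w := isOrtho_sup_right.2 ⟨perp_iff_isOrtho.1 h,
    (isOrtho_orthogonal_right _).mono_right ((span_singleton_le_iff_mem w _).2 hw)⟩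
  have hBrank : finrank ℝ ↥(L₂.direction ⊔ ℝ ∙ w) ≤ k₂ :=
    calc _ ≤ adim L₂ + 1 := L₂.direction.finrank_sup_span_singleton_le w
      _ ≤ k₂ := by omega
  obtain ⟨D₁, D₂, hd₁, hBD₂, hD, hD₁, hD₂⟩ :=
    hB.exists_le_le_finrank_eq (hL₁d.trans_le hk₁) hBrank hdim
  have hp₁₂ : p₂ -ᵥ p₁ ∈ D₁ ⊔ D₂ :=
    hv ▸ add_mem_sup (hd₁ ha) (hBD₂ (mem_sup_right (mem_span_singleton_self w)))
  obtain ⟨X₁, X₂, rfl, rfl, hX, h₁, h₂⟩ :=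
    exists_perpX_of_vsub_mem_sup hp₁ hp₂ hD hd₁ (le_sup_left.trans hBD₂) hp₁₂
  exact ⟨X₁, X₂, hX.2.mono Set.inter_subset_left, hX.2.mono Set.inter_subset_right,
    hD₁, hD₂, hX, h₁, h₂⟩
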